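/- Let H = {H_x}_{x∈X} be a bundle of Hilbert spaces and K an H-operator-valued kernel. Then K is positive semidefinite if and only if there exists a reproducing kernel Hilbert space R of cross-sections f (with f(x) ∈ H_x) such that: (1) K_x h := K(·, x)h ∈ R for all x ∈ X and h ∈ H_x, and (2) ⟨f(x), h⟩_{H_x} = ⟨f, K_x h⟩_R for all f ∈ R, x ∈ X, h ∈ H_x. -/

import Mathlib

/-! If `R` is a reproducing kernel Hilbert space for `K`, then
`∑ i j, ⟪K (xs j) (xs i) (h i), h j⟫ = ‖∑ i, K_{xs i} (h i)‖² ≥ 0`.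
Conversely, a hermitian positive semidefinite kernel gives a positive semidefinite symmetric
bilinear form `⟪d, e⟫ = ∑ x y, ⟪K y x (d x), e y⟫` on finitely supported sections. Let `V` be
the completion of this pre-Hilbert space and `ιₓ h` the class of the section `δₓ h`, so that
`⟪ιₓ h, ι_y k⟫ = ⟪K y x h, k⟫`. Then `f ↦ (x ↦ ιₓ* f)` realises `V` as a space of cross-sections
with `K_x = ιₓ`; it is injective because the `ιₓ h` span a dense subspace of `V`. -/

/-- A reproducing kernel Hilbert space of cross-sections for an operator valued
kernel `K` over a bundle of Hilbert spaces `H`: a Hilbert space `space` realised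
(via the injective linear map `toFun`) as a space of cross-sections `f` with
`f x ∈ H x`, containing all kernel sections `K_x h = K(·,x)h` and satisfying the
reproducing property. -/
structure BundleRKHS {X : Type} (H : X → Type)
    [∀ x, NormedAddCommGroup (H x)] [∀ x, InnerProductSpace ℝ (H x)]
    [∀ x, CompleteSpace (H x)]
    (K : ∀ y x : X, H x →L[ℝ] H y) where
  space : Type
  [grp : NormedAddCommGroup space]
  [ips : InnerProductSpace ℝ space]
  [cpl : CompleteSpace space]
  toFun : space →ₗ[ℝ] (∀ x, H x)
  inj : Function.Injective toFun
  sec : ∀ x, H x → space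
  sec_eval : ∀ (x : X) (h : H x) (y : X), toFun (sec x h) y = K y x h
  reproducing : ∀ (f : space) (x : X) (h : H x),
    (inner ℝ (toFun f x) h : ℝ) = inner ℝ f (sec x h)

attribute [instance] BundleRKHS.grp BundleRKHS.ips BundleRKHS.cpl

open scoped RealInnerProductSpace
open UniformSpace

theorem norm_le_sqrt_opNorm_mul_of_inner_self_eq {F E : Type*} [NormedAddCommGroup F]
    [InnerProductSpace ℝ F] [SeminormedAddCommGroup E] [InnerProductSpace ℝ E]
    (φ : F →ₗ[ℝ] E) (T : F →L[ℝ] F) (hφ : ∀ h, ⟪φ h, φ h⟫ = ⟪T h, h⟫) (h : F) :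
    ‖φ h‖ ≤ √‖T‖ * ‖h‖ := by
  rw [norm_eq_sqrt_real_inner, hφ, ← Real.sqrt_sq (norm_nonneg h),
    ← Real.sqrt_mul (norm_nonneg _)]
  refine Real.sqrt_le_sqrt ?_
  calc ⟪T h, h⟫ ≤ ‖T h‖ * ‖h‖ := real_inner_le_norm _ _
    _ ≤ ‖T‖ * ‖h‖ * ‖h‖ := by gcongr; exact T.le_opNorm h
    _ = ‖T‖ * ‖h‖ ^ 2 := by ring

abbrev PreInnerProductSpace.Core.ofBilinForm {F : Type*} [AddCommGroup F] [Module ℝ F]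
    (B : LinearMap.BilinForm ℝ F) (hsymm : ∀ x y, B x y = B y x) (hnonneg : ∀ x, 0 ≤ B x x) :
    PreInnerProductSpace.Core ℝ F where
  inner x y := B x y
  conj_inner_symm x y := hsymm y x
  re_inner_nonneg := hnonneg
  add_left x y z := by simp only [map_add, LinearMap.add_apply]
  smul_left x y r := by simp only [map_smul, LinearMap.smul_apply, smul_eq_mul, conj_trivial]

variable {X : Type} {H : X → Type} [∀ x, NormedAddCommGroup (H x)]
  [∀ x, InnerProductSpace ℝ (H x)] {K : ∀ y x : X, H x →L[ℝ] H y}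

section KernelForm

variable (K) in
def IsPosSemidefKernel : Prop :=
  ∀ (n : ℕ) (xs : Fin n → X) (h : ∀ i, H (xs i)), 0 ≤ ∑ i, ∑ j, ⟪K (xs j) (xs i) (h i), h j⟫

theorem IsPosSemidefKernel.sum_nonneg (hK : IsPosSemidefKernel K) {ι : Type*} [Fintype ι]
    (xs : ι → X) (h : ∀ i, H (xs i)) : 0 ≤ ∑ i, ∑ j, ⟪K (xs j) (xs i) (h i), h j⟫ := by
  let e := (Fintype.equivFin ι).symm
  rw [← e.sum_comp]
  simp_rw [← e.sum_comp (fun j => ⟪K (xs j) _ _, h j⟫)]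
  exact hK _ (xs ∘ e) fun i => h (e i)

variable [DecidableEq X]

variable (K) in
/-- `kernelForm K d e = ∑ x y, ⟪K y x (d x), e y⟫`. -/
noncomputable def kernelForm : LinearMap.BilinForm ℝ (Π₀ x, H x) :=
  DFinsupp.lsum ℝ fun x => (DFinsupp.lsum ℝ).toLinearMap ∘ₗ
    LinearMap.pi fun y => innerₗ (H y) ∘ₗ (K y x).toLinearMap

@[simp]
theorem kernelForm_single_single (x y : X) (h : H x) (k : H y) :
    kernelForm K (DFinsupp.single x h) (DFinsupp.single y k) = ⟪K y x h, k⟫ := by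
  simp [kernelForm]

theorem kernelForm_sum_single_self {ι : Type*} [Fintype ι] (xs : ι → X) (h : ∀ i, H (xs i)) :
    kernelForm K (∑ i, DFinsupp.single (xs i) (h i)) (∑ j, DFinsupp.single (xs j) (h j)) =
      ∑ i, ∑ j, ⟪K (xs j) (xs i) (h i), h j⟫ := by
  simp only [map_sum, LinearMap.sum_apply, kernelForm_single_single]
  exact Finset.sum_comm

theorem IsPosSemidefKernel.kernelForm_self_nonneg (hK : IsPosSemidefKernel K) (d : Π₀ x, H x) :
    0 ≤ kernelForm K d d := by
  classical
  rw [← DFinsupp.sum_single (f := d), DFinsupp.sum, ← Finset.sum_coe_sort,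
    kernelForm_sum_single_self]
  exact hK.sum_nonneg _ _

theorem kernelForm_comm [∀ x, CompleteSpace (H x)] (herm : ∀ x y, K y x = (K x y).adjoint)
    (d e : Π₀ x, H x) : kernelForm K d e = kernelForm K e d := by
  suffices (kernelForm K).flip = kernelForm K from LinearMap.congr_fun₂ this e d
  refine DFinsupp.lhom_ext' fun y => LinearMap.ext fun k =>
    DFinsupp.lhom_ext' fun x => LinearMap.ext fun h => ?_
  simp [herm y x, ContinuousLinearMap.adjoint_inner_left, real_inner_comm]

end KernelForm

namespace BundleRKHS

section FeatureMap

variable {E : Type} [SeminormedAddCommGroup E] [InnerProductSpace ℝ E]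
  (φ : ∀ x, H x →ₗ[ℝ] E) (hφ : ∀ x y (h : H x) (k : H y), ⟪φ x h, φ y k⟫ = ⟪K y x h, k⟫)

noncomputable def featureCLM (x : X) : H x →L[ℝ] Completion E :=
  Completion.toComplL ∘L (φ x).mkContinuous _
    (norm_le_sqrt_opNorm_mul_of_inner_self_eq (φ x) (K x x) fun h => hφ x x h h)

@[simp]
theorem featureCLM_apply (x : X) (h : H x) : featureCLM φ hφ x h = (φ x h : Completion E) := rfl

variable [∀ x, CompleteSpace (H x)]

include hφ in
theorem adjoint_featureCLM_featureCLM (x : X) (h : H x) (y : X) :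
    (featureCLM φ hφ y).adjoint (featureCLM φ hφ x h) = K y x h := by
  refine ext_inner_right ℝ fun k => ?_
  rw [ContinuousLinearMap.adjoint_inner_left]
  exact (Completion.inner_coe _ _).trans (hφ x y h k)

theorem eq_zero_of_adjoint_featureCLM_eq_zero (hspan : ⨆ x, LinearMap.range (φ x) = ⊤)
    (v : Completion E) (hv : ∀ x, (featureCLM φ hφ x).adjoint v = 0) : v = 0 := by
  have hcoe : ∀ e : E, ⟪v, (e : Completion E)⟫ = 0 := by
    let ψ : E →ₗ[ℝ] ℝ := (innerₗ (Completion E) v) ∘ₗ Completion.toComplL.toLinearMap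
    suffices ⊤ ≤ LinearMap.ker ψ from fun e => this Submodule.mem_top
    rw [← hspan, iSup_le_iff]
    intro x
    rw [LinearMap.range_le_ker_iff]
    ext h
    simpa [ψ, hv x] using (ContinuousLinearMap.adjoint_inner_left (featureCLM φ hφ x) h v).symm
  have hall : ∀ w : Completion E, ⟪v, w⟫ = 0 := fun w =>
    Completion.induction_on w
      (isClosed_eq (continuous_const.inner continuous_id) continuous_const) hcoe
  exact inner_self_eq_zero.mp (hall v)

noncomputable def ofFeatureMap (hspan : ⨆ x, LinearMap.range (φ x) = ⊤) : BundleRKHS H K where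
  space := Completion E
  toFun := LinearMap.pi fun x => (featureCLM φ hφ x).adjoint.toLinearMap
  inj := by
    rw [← LinearMap.ker_eq_bot, LinearMap.ker_eq_bot']
    exact fun v hv => eq_zero_of_adjoint_featureCLM_eq_zero φ hφ hspan v fun x => congrFun hv x
  sec x := featureCLM φ hφ x
  sec_eval := adjoint_featureCLM_featureCLM φ hφ
  reproducing f x h := ContinuousLinearMap.adjoint_inner_left _ _ _

end FeatureMap

variable [∀ x, CompleteSpace (H x)]

theorem inner_sec_sec (R : BundleRKHS H K) (x y : X) (h : H x) (k : H y) :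
    ⟪R.sec x h, R.sec y k⟫ = ⟪K y x h, k⟫ := by
  rw [← R.reproducing, R.sec_eval]

theorem isPosSemidefKernel (R : BundleRKHS H K) : IsPosSemidefKernel K := by
  intro n xs h
  calc 0 ≤ ⟪∑ i, R.sec (xs i) (h i), ∑ j, R.sec (xs j) (h j)⟫ := real_inner_self_nonneg
    _ = ∑ i, ∑ j, ⟪K (xs j) (xs i) (h i), h j⟫ := by
      simp only [sum_inner, inner_sum, R.inner_sec_sec]
      exact Finset.sum_comm

/-- The completion of a seminormed space is Hausdorff, so no quotient by the null vectors of
`kernelForm K` is needed. -/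
noncomputable def ofPosSemidef [DecidableEq X] (herm : ∀ x y, K y x = (K x y).adjoint)
    (hK : IsPosSemidefKernel K) : BundleRKHS H K :=
  letI core := PreInnerProductSpace.Core.ofBilinForm (kernelForm K) (kernelForm_comm herm)
    hK.kernelForm_self_nonneg
  letI := InnerProductSpace.Core.toSeminormedAddCommGroup (𝕜 := ℝ) (F := Π₀ x, H x)
  letI := InnerProductSpace.ofCore core
  ofFeatureMap (E := Π₀ x, H x) DFinsupp.lsingle kernelForm_single_single
    DFinsupp.iSup_range_lsingle

end BundleRKHS

theorem posSemidef_iff_rkhs {X : Type} (H : X → Type)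
    [∀ x, NormedAddCommGroup (H x)] [∀ x, InnerProductSpace ℝ (H x)]
    [∀ x, CompleteSpace (H x)]
    (K : ∀ y x : X, H x →L[ℝ] H y)
    (herm : ∀ x y, K y x = (K x y).adjoint) :
    (∀ (n : ℕ) (xs : Fin n → X) (h : ∀ i, H (xs i)),
        0 ≤ ∑ i, ∑ j, (inner ℝ (K (xs j) (xs i) (h i)) (h j) : ℝ)) ↔
      Nonempty (BundleRKHS H K) := by
  classical
  exact ⟨fun hK => ⟨.ofPosSemidef herm hK⟩, fun ⟨R⟩ => R.isPosSemidefKernel⟩
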